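/- For any integer p ≥ 2, any ε ∈ (0, 1/4], and any g₁, …, g_p ∈ SL_d(ℝ) satisfying κ_{1,2}(g_i) ≤ ε³, δ(X_{g_{i+1}}^M, Y_{g_i}^m) ≥ 2ε and δ(X_{g_i}^M, Y_{g_{i+1}}^m) ≥ 2ε for all i, the product satisfies κ₁(g_p⋯g₁) ≥ ε^{p−1} κ₁(g_p)⋯κ₁(g₁) and κ_{1,2}(g_p⋯g₁) ≤ κ_{1,2}(g₁)⋯κ_{1,2}(g_p)/ε^{2(p−1)}. -/

import Mathlib

/-!
Follow the unit vector `v = l₁ᵀ e₁` through the product. By induction, `uⱼ = gⱼ ⋯ g₁ v` stays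
`ε²`-aligned with the top singular direction `kⱼ e₁` of `gⱼ`, in the sense that
`(1 - ε⁴)‖uⱼ‖² ≤ ⟪kⱼ e₁, uⱼ⟫²`. Indeed, transversality `δ(X_{gⱼ}^M, Y_{gⱼ₊₁}^m) ≥ 2ε` forces the
first coordinate of `lⱼ₊₁ uⱼ` to be at least `ε‖uⱼ‖`, so `gⱼ₊₁` stretches `uⱼ` by at least
`ε κ₁(gⱼ₊₁)`, and the gap `κ₂ ≤ ε³ κ₁` then squeezes the image into `ε²`-alignment with
`kⱼ₊₁ e₁`. This bounds `κ₁` of the product from below; the bound on `κ_{1,2} = ‖Λ²·‖ / κ₁²`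
follows because `‖Λ²·‖` is submultiplicative.
-/

noncomputable section

open scoped RealInnerProductSpace

def op {d : ℕ} (g : Matrix (Fin d) (Fin d) ℝ) :
    EuclideanSpace ℝ (Fin d) →L[ℝ] EuclideanSpace ℝ (Fin d) :=
  Matrix.toEuclideanCLM (𝕜 := ℝ) g

/-- The norm `‖x ∧ y‖ = √(‖x‖²‖y‖² - ⟪x,y⟫²)` on `Λ²(ℝ^d)` for decomposable vectors. -/
def wnorm {d : ℕ} (x y : EuclideanSpace ℝ (Fin d)) : ℝ :=
  Real.sqrt (‖x‖ ^ 2 * ‖y‖ ^ 2 - ⟪x, y⟫ ^ 2)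

/-- `κ₁(g) := ‖g‖`, the first singular value. -/
def kappa1 {d : ℕ} (g : Matrix (Fin d) (Fin d) ℝ) : ℝ := ‖op g‖

/-- `κ_{1,2}(g) = κ₂(g)/κ₁(g) = ‖Λ²g‖/‖g‖²`, where
`‖Λ²g‖ = sup ‖gx ∧ gy‖/‖x ∧ y‖`. -/
def kappa12 {d : ℕ} (g : Matrix (Fin d) (Fin d) ℝ) : ℝ :=
  (⨆ q : EuclideanSpace ℝ (Fin d) × EuclideanSpace ℝ (Fin d),
      wnorm (op g q.1) (op g q.2) / wnorm q.1 q.2) / ‖op g‖ ^ 2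

open Matrix
open scoped Matrix.Norms.L2Operator

local notation "𝔼" n:max => EuclideanSpace ℝ (Fin n)

section Orthogonal

variable {d : ℕ} {k : Matrix (Fin d) (Fin d) ℝ}

lemma op_mul_apply (g h : Matrix (Fin d) (Fin d) ℝ) (x : 𝔼 d) : op (g * h) x = op g (op h x) := by
  simp [op, map_mul]

lemma op_one_apply (x : 𝔼 d) : op 1 x = x := by
  simp [op]

lemma op_diagonal_apply (a : Fin d → ℝ) (x : 𝔼 d) (i : Fin d) : op (diagonal a) x i = a i * x i :=
  mulVec_diagonal a _ i

lemma op_diagonal_single (a : Fin d → ℝ) (i : Fin d) :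
    op (diagonal a) (EuclideanSpace.single i 1) = a i • EuclideanSpace.single i 1 := by
  ext j
  rw [op_diagonal_apply]
  rcases eq_or_ne j i with rfl | h <;> simp [*]

lemma op_mem_unitary (hk : k ∈ orthogonalGroup (Fin d) ℝ) : op k ∈ unitary (𝔼 d →L[ℝ] 𝔼 d) :=
  Unitary.map_mem _ hk

lemma norm_op_apply_of_mem_orthogonalGroup (hk : k ∈ orthogonalGroup (Fin d) ℝ) (x : 𝔼 d) :
    ‖op k x‖ = ‖x‖ :=
  ContinuousLinearMap.norm_map_of_mem_unitary (op_mem_unitary hk) x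

lemma inner_op_apply_of_mem_orthogonalGroup (hk : k ∈ orthogonalGroup (Fin d) ℝ) (x y : 𝔼 d) :
    ⟪op k x, op k y⟫ = ⟪x, y⟫ :=
  ContinuousLinearMap.inner_map_map_of_mem_unitary (op_mem_unitary hk) x y

lemma op_apply_op_star_apply (hk : k ∈ orthogonalGroup (Fin d) ℝ) (x : 𝔼 d) :
    op k (op (star k) x) = x := by
  rw [← op_mul_apply, Unitary.mul_star_self_of_mem hk, op_one_apply]

end Orthogonal

section Wnorm

variable {d : ℕ}

lemma wnorm_nonneg (x y : 𝔼 d) : 0 ≤ wnorm x y := Real.sqrt_nonneg _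

lemma wnorm_zero_left (y : 𝔼 d) : wnorm 0 y = 0 := by
  simp [wnorm]

lemma wnorm_le_norm_mul_norm (x y : 𝔼 d) : wnorm x y ≤ ‖x‖ * ‖y‖ := by
  rw [wnorm, Real.sqrt_le_left (by positivity)]
  nlinarith [sq_nonneg ⟪x, y⟫]

lemma wnorm_of_inner_eq_zero {x y : 𝔼 d} (h : ⟪x, y⟫ = 0) : wnorm x y = ‖x‖ * ‖y‖ := by
  rw [wnorm, h, ← mul_pow, zero_pow two_ne_zero, sub_zero, Real.sqrt_sq (by positivity)]

lemma wnorm_add_smul_right (x y : 𝔼 d) (c : ℝ) : wnorm x (y + c • x) = wnorm x y := by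
  rw [wnorm, wnorm, inner_add_right, real_inner_smul_right, real_inner_self_eq_norm_sq,
    norm_add_sq_real, real_inner_smul_right, norm_smul, Real.norm_eq_abs, mul_pow, sq_abs,
    real_inner_comm x y]
  ring_nf

lemma wnorm_smul_smul {s t : ℝ} (hs : 0 ≤ s) (ht : 0 ≤ t) (x y : 𝔼 d) :
    wnorm (s • x) (t • y) = s * t * wnorm x y := by
  rw [wnorm, wnorm, norm_smul, norm_smul, real_inner_smul_left, real_inner_smul_right,
    Real.norm_of_nonneg hs, Real.norm_of_nonneg ht, ← Real.sqrt_sq (by positivity : 0 ≤ s * t),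
    ← Real.sqrt_mul (by positivity)]
  ring_nf

lemma wnorm_map_le (T : 𝔼 d →L[ℝ] 𝔼 d) (x y : 𝔼 d) : wnorm (T x) (T y) ≤ ‖T‖ ^ 2 * wnorm x y := by
  rcases eq_or_ne x 0 with rfl | hx
  · simp [wnorm_zero_left]
  obtain ⟨y, c, rfl, hperp⟩ : ∃ y' : 𝔼 d, ∃ c : ℝ, y = y' + c • x ∧ ⟪x, y'⟫ = 0 := by
    refine ⟨y - (⟪x, y⟫ / ‖x‖ ^ 2) • x, ⟪x, y⟫ / ‖x‖ ^ 2, by abel, ?_⟩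
    rw [inner_sub_right, real_inner_smul_right, real_inner_self_eq_norm_sq]
    field_simp
    ring
  calc wnorm (T x) (T (y + c • x)) = wnorm (T x) (T y) := by
        rw [map_add, map_smul, wnorm_add_smul_right]
    _ ≤ ‖T x‖ * ‖T y‖ := wnorm_le_norm_mul_norm _ _
    _ ≤ (‖T‖ * ‖x‖) * (‖T‖ * ‖y‖) := by gcongr <;> exact T.le_opNorm _
    _ = ‖T‖ ^ 2 * wnorm x (y + c • x) := by
        rw [wnorm_add_smul_right, wnorm_of_inner_eq_zero hperp]; ring

lemma wnorm_op_of_mem_orthogonalGroup {k : Matrix (Fin d) (Fin d) ℝ}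
    (hk : k ∈ orthogonalGroup (Fin d) ℝ) (x y : 𝔼 d) : wnorm (op k x) (op k y) = wnorm x y := by
  rw [wnorm, wnorm, norm_op_apply_of_mem_orthogonalGroup hk,
    norm_op_apply_of_mem_orthogonalGroup hk, inner_op_apply_of_mem_orthogonalGroup hk]

end Wnorm

section WedgeNorm

variable {d : ℕ}

/-- `‖Λ²g‖ = κ₁(g) κ₂(g)`. -/
def wedgeNorm (g : Matrix (Fin d) (Fin d) ℝ) : ℝ :=
  ⨆ q : 𝔼 d × 𝔼 d, wnorm (op g q.1) (op g q.2) / wnorm q.1 q.2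

lemma kappa12_eq_wedgeNorm_div (g : Matrix (Fin d) (Fin d) ℝ) :
    kappa12 g = wedgeNorm g / kappa1 g ^ 2 := rfl

lemma wnorm_div_wnorm_le_wedgeNorm (g : Matrix (Fin d) (Fin d) ℝ) (x y : 𝔼 d) :
    wnorm (op g x) (op g y) / wnorm x y ≤ wedgeNorm g := by
  refine le_ciSup (f := fun q : 𝔼 d × 𝔼 d => wnorm (op g q.1) (op g q.2) / wnorm q.1 q.2)
    ⟨‖op g‖ ^ 2, ?_⟩ (x, y)
  rintro _ ⟨q, rfl⟩
  exact div_le_of_le_mul₀ (wnorm_nonneg _ _) (by positivity) (wnorm_map_le _ _ _)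

lemma wedgeNorm_nonneg (g : Matrix (Fin d) (Fin d) ℝ) : 0 ≤ wedgeNorm g := by
  simpa [wnorm_zero_left] using wnorm_div_wnorm_le_wedgeNorm g 0 0

lemma wnorm_le_wedgeNorm_mul (g : Matrix (Fin d) (Fin d) ℝ) (x y : 𝔼 d) :
    wnorm (op g x) (op g y) ≤ wedgeNorm g * wnorm x y := by
  rcases (wnorm_nonneg x y).eq_or_lt with h | h
  · rw [← h, mul_zero]
    simpa [← h] using wnorm_map_le (op g) x y
  · exact (div_le_iff₀ h).1 (wnorm_div_wnorm_le_wedgeNorm g x y)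

lemma wedgeNorm_le {g : Matrix (Fin d) (Fin d) ℝ} {C : ℝ} (hC : 0 ≤ C)
    (h : ∀ x y, wnorm (op g x) (op g y) ≤ C * wnorm x y) : wedgeNorm g ≤ C :=
  ciSup_le fun q => div_le_of_le_mul₀ (wnorm_nonneg _ _) hC (h q.1 q.2)

lemma wedgeNorm_mul_le (g h : Matrix (Fin d) (Fin d) ℝ) :
    wedgeNorm (g * h) ≤ wedgeNorm g * wedgeNorm h := by
  refine wedgeNorm_le (mul_nonneg (wedgeNorm_nonneg g) (wedgeNorm_nonneg h)) fun x y => ?_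
  calc wnorm (op (g * h) x) (op (g * h) y) = wnorm (op g (op h x)) (op g (op h y)) := by
        simp only [op_mul_apply]
    _ ≤ wedgeNorm g * wnorm (op h x) (op h y) := wnorm_le_wedgeNorm_mul _ _ _
    _ ≤ wedgeNorm g * (wedgeNorm h * wnorm x y) :=
        mul_le_mul_of_nonneg_left (wnorm_le_wedgeNorm_mul _ _ _) (wedgeNorm_nonneg g)
    _ = wedgeNorm g * wedgeNorm h * wnorm x y := by ring

lemma wedgeNorm_list_prod_le (L : List (Matrix (Fin d) (Fin d) ℝ)) :
    wedgeNorm L.prod ≤ (L.map wedgeNorm).prod := by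
  induction L with
  | nil => exact wedgeNorm_le zero_le_one fun x y => by simp [op_one_apply]
  | cons g L ih =>
    rw [List.prod_cons, List.map_cons, List.prod_cons]
    exact (wedgeNorm_mul_le _ _).trans (mul_le_mul_of_nonneg_left ih (wedgeNorm_nonneg g))

lemma kappa12_prod_le_of_le_kappa1_prod {p : ℕ} (g : Fin p → Matrix (Fin d) (Fin d) ℝ) {c : ℝ}
    (hc : 0 < c) (hg : ∀ i, 0 < kappa1 (g i))
    (h : c * ∏ i, kappa1 (g i) ≤ kappa1 (List.ofFn g).reverse.prod) :
    kappa12 (List.ofFn g).reverse.prod ≤ (∏ i, kappa12 (g i)) / c ^ 2 := by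
  have hwedge : wedgeNorm (List.ofFn g).reverse.prod ≤ ∏ i, wedgeNorm (g i) := by
    simpa [List.map_reverse, List.prod_reverse, List.map_ofFn, List.prod_ofFn] using
      wedgeNorm_list_prod_le (List.ofFn g).reverse
  have hpos : 0 < c * ∏ i, kappa1 (g i) := mul_pos hc (Finset.prod_pos fun i _ => hg i)
  calc kappa12 (List.ofFn g).reverse.prod
      = wedgeNorm (List.ofFn g).reverse.prod / kappa1 (List.ofFn g).reverse.prod ^ 2 := rfl
    _ ≤ (∏ i, wedgeNorm (g i)) / (c * ∏ i, kappa1 (g i)) ^ 2 :=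
        div_le_div₀ (Finset.prod_nonneg fun i _ => wedgeNorm_nonneg _) hwedge (pow_pos hpos 2)
          (pow_le_pow_left₀ hpos.le h 2)
    _ = (∏ i, kappa12 (g i)) / c ^ 2 := by
        simp only [kappa12_eq_wedgeNorm_div, Finset.prod_div_distrib, Finset.prod_pow]
        rw [mul_pow, div_div, mul_comm]

end WedgeNorm

structure IsCartanDecomp {n : ℕ} (g k l : Matrix (Fin n) (Fin n) ℝ) (a : Fin n → ℝ) : Prop where
  k_mem : k ∈ orthogonalGroup (Fin n) ℝ
  l_mem : l ∈ orthogonalGroup (Fin n) ℝ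
  eq : g = k * diagonal a * l
  antitone : Antitone a
  nonneg : ∀ r, 0 ≤ a r

namespace IsCartanDecomp

section

variable {n : ℕ} {g k l : Matrix (Fin n) (Fin n) ℝ} {a : Fin n → ℝ}

lemma op_apply (h : IsCartanDecomp g k l a) (x : 𝔼 n) :
    op g x = op k (op (diagonal a) (op l x)) := by
  rw [h.eq, op_mul_apply, op_mul_apply]

lemma op_op_star_single (h : IsCartanDecomp g k l a) (i : Fin n) :
    op g (op (star l) (EuclideanSpace.single i 1)) = a i • op k (EuclideanSpace.single i 1) := by
  rw [h.op_apply, op_apply_op_star_apply h.l_mem, op_diagonal_single, map_smul]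

lemma pos_of_det_ne_zero (h : IsCartanDecomp g k l a) (hg : g.det ≠ 0) (r : Fin n) : 0 < a r := by
  refine (h.nonneg r).lt_of_ne fun hr => hg ?_
  rw [h.eq, det_mul, det_mul, det_diagonal, Finset.prod_eq_zero (Finset.mem_univ r) hr.symm]
  ring

lemma kappa1_eq [NeZero n] (h : IsCartanDecomp g k l a) : kappa1 g = a 0 := by
  -- under `Matrix.Norms.L2Operator`, `‖g‖` is by definition `‖op g‖`
  change ‖g‖ = a 0
  rw [h.eq, CStarRing.norm_mul_mem_unitary _ h.l_mem, CStarRing.norm_mem_unitary_mul _ h.k_mem,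
    l2_opNorm_diagonal]
  refine le_antisymm ((pi_norm_le_iff_of_nonneg (h.nonneg 0)).2 fun r => ?_) ?_
  · rw [Real.norm_of_nonneg (h.nonneg r)]
    exact h.antitone (Fin.zero_le r)
  · simpa [Real.norm_of_nonneg (h.nonneg 0)] using norm_le_pi_norm a 0

end

variable {d : ℕ} {g k l : Matrix (Fin (d + 2)) (Fin (d + 2)) ℝ} {a : Fin (d + 2) → ℝ}

lemma mul_le_wedgeNorm (h : IsCartanDecomp g k l a) : a 0 * a 1 ≤ wedgeNorm g := by
  have hunit : wnorm (EuclideanSpace.single (0 : Fin (d + 2)) (1 : ℝ))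
      (EuclideanSpace.single 1 1) = 1 := by
    rw [wnorm_of_inner_eq_zero (by simp [EuclideanSpace.inner_single_left])]
    simp
  have := wnorm_div_wnorm_le_wedgeNorm g (op (star l) (EuclideanSpace.single 0 1))
    (op (star l) (EuclideanSpace.single 1 1))
  rwa [h.op_op_star_single, h.op_op_star_single, wnorm_smul_smul (h.nonneg 0) (h.nonneg 1),
    wnorm_op_of_mem_orthogonalGroup h.k_mem,
    wnorm_op_of_mem_orthogonalGroup (Unitary.star_mem h.l_mem), hunit, div_one, mul_one] at this

lemma div_le_kappa12 (h : IsCartanDecomp g k l a) (h0 : 0 < a 0) : a 1 / a 0 ≤ kappa12 g := by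
  rw [kappa12_eq_wedgeNorm_div, h.kappa1_eq, le_div_iff₀ (by positivity)]
  calc a 1 / a 0 * a 0 ^ 2 = a 0 * a 1 := by field_simp
    _ ≤ wedgeNorm g := h.mul_le_wedgeNorm

end IsCartanDecomp

section Alignment

lemma le_abs_inner_of_aligned {F : Type*} [NormedAddCommGroup F] [InnerProductSpace ℝ F]
    {ε : ℝ} (hε₀ : 0 ≤ ε) (hε : ε ≤ 1 / 4) {y z u : F} (hy : ‖y‖ ≤ 1) (hz : ‖z‖ = 1)
    (hyz : 2 * ε ≤ |⟪y, z⟫|) (hu : (1 - ε ^ 4) * ‖u‖ ^ 2 ≤ ⟪z, u⟫ ^ 2) :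
    ε * ‖u‖ ≤ |⟪y, u⟫| := by
  set c := ⟪z, u⟫
  set r := u - c • z
  have hr_sq : ‖r‖ ^ 2 = ‖u‖ ^ 2 - c ^ 2 := by
    rw [norm_sub_sq_real, norm_smul, real_inner_smul_right, hz, Real.norm_eq_abs,
      real_inner_comm]
    ring_nf
    rw [sq_abs]
    ring
  have hr : ‖r‖ ≤ ε ^ 2 * ‖u‖ := by
    rw [← sq_le_sq₀ (norm_nonneg r) (by positivity), hr_sq]
    nlinarith
  have hc : (1 - ε ^ 4) * ‖u‖ ≤ |c| := by
    have hε4 : ε ^ 4 ≤ 1 := by nlinarith [pow_le_pow_left₀ hε₀ hε 4]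
    rw [← sq_le_sq₀ (by nlinarith [norm_nonneg u]) (abs_nonneg c), sq_abs]
    nlinarith [mul_nonneg (mul_nonneg (pow_nonneg hε₀ 4) (sub_nonneg.2 hε4)) (sq_nonneg ‖u‖)]
  have hyr : |⟪y, r⟫| ≤ ε ^ 2 * ‖u‖ :=
    (abs_real_inner_le_norm y r).trans (by nlinarith [norm_nonneg r])
  have hsplit : ⟪y, u⟫ = c * ⟪y, z⟫ + ⟪y, r⟫ := by
    simp only [r, inner_sub_right, real_inner_smul_right]
    ring
  calc ε * ‖u‖ ≤ (1 - ε ^ 4) * ‖u‖ * (2 * ε) - ε ^ 2 * ‖u‖ := by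
        nlinarith [pow_le_pow_left₀ hε₀ hε 4, norm_nonneg u, mul_nonneg hε₀ (norm_nonneg u)]
    _ ≤ |c| * |⟪y, z⟫| - |⟪y, r⟫| :=
        sub_le_sub (mul_le_mul hc hyz (by positivity) (abs_nonneg c)) hyr
    _ ≤ |⟪y, u⟫| := by
        rw [hsplit, ← abs_mul]
        simpa only [abs_neg, sub_neg_eq_add] using abs_sub_abs_le_abs_sub (c * ⟪y, z⟫) (-⟪y, r⟫)

variable {d : ℕ}

lemma norm_op_diagonal_sq_le {a : Fin (d + 2) → ℝ} (ha : Antitone a) (ha₀ : ∀ r, 0 ≤ a r)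
    (w : 𝔼 (d + 2)) :
    ‖op (diagonal a) w‖ ^ 2 ≤ (a 0 * w 0) ^ 2 + a 1 ^ 2 * (‖w‖ ^ 2 - w 0 ^ 2) := by
  have hsq (v : 𝔼 (d + 2)) : ‖v‖ ^ 2 = v 0 ^ 2 + ∑ j : Fin (d + 1), v j.succ ^ 2 := by
    simp [EuclideanSpace.norm_sq_eq, Fin.sum_univ_succ]
  rw [hsq, hsq w, add_sub_cancel_left, Finset.mul_sum]
  simp only [op_diagonal_apply]
  gcongr with j
  rw [mul_pow]
  gcongr
  · exact ha₀ _
  · exact ha (by simp [Fin.le_def])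

lemma sq_norm_op_diagonal_le_of_aligned {a : Fin (d + 2) → ℝ} (ha : Antitone a)
    (ha₀ : ∀ r, 0 ≤ a r) {ε : ℝ} (hε₀ : 0 ≤ ε) (hε : ε ≤ 1 / 4) (h12 : a 1 ≤ ε ^ 3 * a 0)
    {w : 𝔼 (d + 2)} (hw : ε * ‖w‖ ≤ |w 0|) :
    (1 - ε ^ 4) * ‖op (diagonal a) w‖ ^ 2 ≤ (a 0 * w 0) ^ 2 := by
  have hw0 : w 0 ^ 2 ≤ ‖w‖ ^ 2 := by
    rw [← sq_abs]
    exact pow_le_pow_left₀ (abs_nonneg _) (by simpa using PiLp.norm_apply_le w 0) 2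
  have hεw : ε ^ 2 * ‖w‖ ^ 2 ≤ w 0 ^ 2 := by
    rw [← sq_abs (w 0), ← mul_pow]
    exact pow_le_pow_left₀ (by positivity) hw 2
  have htail : a 1 ^ 2 * (‖w‖ ^ 2 - w 0 ^ 2) ≤ ε ^ 4 * (a 0 * w 0) ^ 2 :=
    calc a 1 ^ 2 * (‖w‖ ^ 2 - w 0 ^ 2) ≤ (ε ^ 3 * a 0) ^ 2 * ‖w‖ ^ 2 := by
          gcongr
          · exact ha₀ 1
          · nlinarith [sq_nonneg (w 0)]
      _ = ε ^ 4 * a 0 ^ 2 * (ε ^ 2 * ‖w‖ ^ 2) := by ring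
      _ ≤ ε ^ 4 * a 0 ^ 2 * w 0 ^ 2 := by gcongr
      _ = ε ^ 4 * (a 0 * w 0) ^ 2 := by ring
  have hε4 : ε ^ 4 ≤ 1 := by nlinarith [pow_le_pow_left₀ hε₀ hε 4]
  nlinarith [norm_op_diagonal_sq_le ha ha₀ w, mul_nonneg (pow_nonneg hε₀ 8) (sq_nonneg (a 0 * w 0))]

theorem IsCartanDecomp.aligned_step {g k l : Matrix (Fin (d + 2)) (Fin (d + 2)) ℝ}
    {a : Fin (d + 2) → ℝ} (h : IsCartanDecomp g k l a) {ε : ℝ} (hε₀ : 0 ≤ ε) (hε : ε ≤ 1 / 4)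
    (h12 : a 1 ≤ ε ^ 3 * a 0) {z u : 𝔼 (d + 2)} (hz : ‖z‖ = 1) (hlz : 2 * ε ≤ |op l z 0|)
    (hu : (1 - ε ^ 4) * ‖u‖ ^ 2 ≤ ⟪z, u⟫ ^ 2) :
    ε * a 0 * ‖u‖ ≤ ‖op g u‖ ∧
      (1 - ε ^ 4) * ‖op g u‖ ^ 2 ≤ ⟪op k (EuclideanSpace.single 0 1), op g u⟫ ^ 2 := by
  set w := op l u
  have hwu : ‖w‖ = ‖u‖ := norm_op_apply_of_mem_orthogonalGroup h.l_mem u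
  have hw : ε * ‖w‖ ≤ |w 0| := by
    have := le_abs_inner_of_aligned hε₀ hε (y := EuclideanSpace.single (0 : Fin (d + 2)) 1)
      (z := op l z) (u := w) (by simp)
      (by rwa [norm_op_apply_of_mem_orthogonalGroup h.l_mem])
      (by simpa [EuclideanSpace.inner_single_left] using hlz)
      (by rwa [inner_op_apply_of_mem_orthogonalGroup h.l_mem, hwu])
    simpa [EuclideanSpace.inner_single_left] using this
  have hnorm : ‖op g u‖ = ‖op (diagonal a) w‖ := by
    rw [h.op_apply, norm_op_apply_of_mem_orthogonalGroup h.k_mem]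
  have hinner : ⟪op k (EuclideanSpace.single 0 1), op g u⟫ = a 0 * w 0 := by
    rw [h.op_apply, inner_op_apply_of_mem_orthogonalGroup h.k_mem,
      EuclideanSpace.inner_single_left, op_diagonal_apply]
    simp [w]
  refine ⟨?_, ?_⟩
  · calc ε * a 0 * ‖u‖ = a 0 * (ε * ‖w‖) := by rw [hwu]; ring
      _ ≤ a 0 * |w 0| := mul_le_mul_of_nonneg_left hw (h.nonneg 0)
      _ = |op (diagonal a) w 0| := by rw [op_diagonal_apply, abs_mul, abs_of_nonneg (h.nonneg 0)]
      _ ≤ ‖op (diagonal a) w‖ := by simpa using PiLp.norm_apply_le (op (diagonal a) w) 0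
      _ = ‖op g u‖ := hnorm.symm
  · rw [hnorm, hinner]
    exact sq_norm_op_diagonal_le_of_aligned h.antitone h.nonneg hε₀ hε h12 hw

theorem aligned_chain {n : ℕ} {g k l : Fin (n + 1) → Matrix (Fin (d + 2)) (Fin (d + 2)) ℝ}
    {a : Fin (n + 1) → Fin (d + 2) → ℝ} (h : ∀ i, IsCartanDecomp (g i) (k i) (l i) (a i))
    {ε : ℝ} (hε₀ : 0 ≤ ε) (hε : ε ≤ 1 / 4) (h12 : ∀ i, a i 1 ≤ ε ^ 3 * a i 0)
    (hδ : ∀ i : Fin n, 2 * ε ≤ |op (l i.succ) (op (k i.castSucc) (EuclideanSpace.single 0 1)) 0|)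
    {v : 𝔼 (d + 2)} (hv : op (l 0) v = EuclideanSpace.single 0 1) :
    ε ^ n * ∏ i, a i 0 ≤ ‖op (List.ofFn g).reverse.prod v‖ ∧
      (1 - ε ^ 4) * ‖op (List.ofFn g).reverse.prod v‖ ^ 2 ≤
        ⟪op (k (Fin.last n)) (EuclideanSpace.single 0 1), op (List.ofFn g).reverse.prod v⟫ ^ 2 := by
  induction n with
  | zero =>
    have hk : ‖op (k 0) (EuclideanSpace.single 0 1)‖ = 1 := by
      simp [norm_op_apply_of_mem_orthogonalGroup (h 0).k_mem]
    have hgv : op (g 0) v = a 0 0 • op (k 0) (EuclideanSpace.single 0 1) := by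
      rw [(h 0).op_apply, hv, op_diagonal_single, map_smul]
    simp only [List.ofFn_succ, List.ofFn_zero, List.reverse_singleton, List.prod_singleton]
    rw [hgv]
    simp only [Fin.last_zero, norm_smul, real_inner_smul_right, real_inner_self_eq_norm_sq, hk,
      Real.norm_of_nonneg ((h 0).nonneg 0)]
    exact ⟨by simp, by nlinarith [mul_nonneg (pow_nonneg hε₀ 4) (sq_nonneg (a 0 0))]⟩
  | succ n ih =>
    obtain ⟨hnorm, halign⟩ := ih (fun i => h i.castSucc) (fun i => h12 _)
      (fun i => by simpa using hδ i.castSucc) (by simpa using hv)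
    obtain ⟨hstep, halign'⟩ := (h (Fin.last (n + 1))).aligned_step hε₀ hε (h12 _)
      (by simp [norm_op_apply_of_mem_orthogonalGroup (h _).k_mem]) (by simpa using hδ (Fin.last n))
      halign
    rw [List.ofFn_succ', List.concat_eq_append, List.reverse_concat, List.prod_cons, op_mul_apply,
      Fin.prod_univ_castSucc]
    refine ⟨?_, halign'⟩
    calc ε ^ (n + 1) * ((∏ i : Fin (n + 1), a i.castSucc 0) * a (Fin.last (n + 1)) 0)
        = ε * a (Fin.last (n + 1)) 0 * (ε ^ n * ∏ i : Fin (n + 1), a i.castSucc 0) := by ring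
      _ ≤ ε * a (Fin.last (n + 1)) 0 * ‖op (List.ofFn fun i => g i.castSucc).reverse.prod v‖ :=
        mul_le_mul_of_nonneg_left hnorm (mul_nonneg hε₀ ((h _).nonneg 0))
      _ ≤ _ := hstep

end Alignment

/-- For `p ≥ 2`, `ε ∈ (0, 1/4]`, and `g₁, …, g_p ∈ SL_d(ℝ)` (with Cartan decompositions
`gᵢ = kᵢ (diagonal aᵢ) lᵢ`) with `κ_{1,2}(gᵢ) ≤ ε³`, `δ(X_{g_{i+1}}^M, Y_{g_i}^m) ≥ 2ε`
and `δ(X_{g_i}^M, Y_{g_{i+1}}^m) ≥ 2ε`, the product `g_p ⋯ g₁` satisfies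
`κ₁(g_p⋯g₁) ≥ ε^{p-1} κ₁(g_p)⋯κ₁(g₁)` and
`κ_{1,2}(g_p⋯g₁) ≤ κ_{1,2}(g₁)⋯κ_{1,2}(g_p) / ε^{2(p-1)}`. -/
theorem stmt3 {d : ℕ} (hd : 2 ≤ d) (p : ℕ) (hp : 2 ≤ p)
    (ε : ℝ) (hε : ε ∈ Set.Ioc (0 : ℝ) (1/4))
    (g k l : Fin p → Matrix (Fin d) (Fin d) ℝ) (a : Fin p → Fin d → ℝ)
    (hg : ∀ i, (g i).det = 1)
    (hk : ∀ i, k i ∈ Matrix.orthogonalGroup (Fin d) ℝ)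
    (hl : ∀ i, l i ∈ Matrix.orthogonalGroup (Fin d) ℝ)
    (hdecomp : ∀ i, g i = k i * Matrix.diagonal (a i) * l i)
    (hmono : ∀ i, ∀ r s : Fin d, r ≤ s → a i s ≤ a i r)
    (hpos : ∀ i r, 0 ≤ a i r)
    (h12 : ∀ i, kappa12 (g i) ≤ ε ^ 3)
    (hδ₂ : ∀ (i : Fin p) (h : (i : ℕ) + 1 < p),
      2 * ε ≤ |op (l ⟨(i : ℕ) + 1, h⟩) (op (k i)
        (EuclideanSpace.single ⟨0, by omega⟩ 1)) ⟨0, by omega⟩|) :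
    ε ^ (p - 1) * ∏ i : Fin p, kappa1 (g i) ≤ kappa1 ((List.ofFn g).reverse.prod) ∧
      kappa12 ((List.ofFn g).reverse.prod) ≤ (∏ i : Fin p, kappa12 (g i)) / ε ^ (2 * (p - 1)) := by
  obtain ⟨hε₀, hε⟩ := hε
  obtain ⟨d, rfl⟩ : ∃ d', d = d' + 2 := ⟨d - 2, by omega⟩
  obtain ⟨n, rfl⟩ : ∃ n, p = n + 1 := ⟨p - 1, by omega⟩
  have hcartan i : IsCartanDecomp (g i) (k i) (l i) (a i) :=
    ⟨hk i, hl i, hdecomp i, hmono i, hpos i⟩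
  have ha₀ i : 0 < a i 0 := (hcartan i).pos_of_det_ne_zero (by simp [hg i]) 0
  have hκ₁ i : kappa1 (g i) = a i 0 := (hcartan i).kappa1_eq
  have h12' i : a i 1 ≤ ε ^ 3 * a i 0 :=
    (div_le_iff₀ (ha₀ i)).1 (((hcartan i).div_le_kappa12 (ha₀ i)).trans (h12 i))
  set v := op (star (l 0)) (EuclideanSpace.single 0 1)
  have hv : ‖v‖ = 1 := by simp [v, norm_op_apply_of_mem_orthogonalGroup (Unitary.star_mem (hl 0))]
  have hchain := (aligned_chain hcartan hε₀.le hε h12' (fun i => hδ₂ i.castSucc i.succ.isLt)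
    (op_apply_op_star_apply (hl 0) _)).1
  have hnorm : ε ^ n * ∏ i, kappa1 (g i) ≤ kappa1 (List.ofFn g).reverse.prod := by
    simp only [hκ₁]
    calc _ ≤ ‖op (List.ofFn g).reverse.prod v‖ := hchain
      _ ≤ ‖op (List.ofFn g).reverse.prod‖ * ‖v‖ := (op _).le_opNorm v
      _ = kappa1 (List.ofFn g).reverse.prod := by rw [hv, mul_one]; rfl
  refine ⟨by simpa using hnorm, ?_⟩
  simpa [← pow_mul, mul_comm] using
    kappa12_prod_le_of_le_kappa1_prod g (pow_pos hε₀ n) (fun i => hκ₁ i ▸ ha₀ i) hnorm
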